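/- arXiv:1110.1894 — 3 statements merged into one kernel-verified Lean document; each statement's English description precedes it below -/
import Mathlib

section
/- Let G be an undirected social network and let p = (p_i)_{i∈V} be any pricing-probability vector with p_i ∈ [1/2, 1]. If π is a bijection from V to {1, …, |V|} that orders the buyers in non-increasing order of their pricing probabilities (i.e., π(i) < π(j) implies p_i ≥ p_j), then for every bijection σ : V → {1, …, |V|} one has R(σ, p) ≤ R(π, p). In other words, approaching the buyers in non-increasing order of their pricing probabilities maximizes the revenue extracted from G under p. -/
/-!
Apart from the self-loop terms, which do not depend on the order, the revenue is a sum over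
unordered pairs `{i, j}` of `p_i p_j w_ij (1 - p_k)`, where `k` is whichever of `i, j` is
approached later. Putting the buyer with the larger pricing probability first maximizes every
pair term separately, because `1 - p_k` is then as large as possible.
-/

open Finset

/-- The revenue of a marketing strategy `(π, p)` on an undirected social network with
weights `w`: `R(π, p) = Σ_i p_i (1 - p_i) (w_ii + Σ_{j : π(j) < π(i)} p_j w_ji)`. -/
noncomputable def revenue {V : Type*} [Fintype V] [DecidableEq V]
    (w : V → V → ℝ) (π : V ≃ Fin (Fintype.card V)) (p : V → ℝ) : ℝ :=
  ∑ i, p i * (1 - p i) *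
    (w i i + ∑ j ∈ univ.filter (fun j => π j < π i), p j * w j i)

/-- Read `f i j` as the contribution of the pair `{i, j}` when `j` precedes `i`: an order that
realizes the larger of the two possible contributions of every pair maximizes the total. -/
theorem sum_sum_filter_lt_le_of_ordered {ι α : Type*} [Fintype ι] [LinearOrder α]
    (f : ι → ι → ℝ) {σ π : ι → α} (hσ : Function.Injective σ) (hπ : Function.Injective π)
    (hf : ∀ i j, π j < π i → f j i ≤ f i j) :
    ∑ i, ∑ j ∈ univ.filter (fun j => σ j < σ i), f i j ≤
      ∑ i, ∑ j ∈ univ.filter (fun j => π j < π i), f i j := by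
  have symmetrize : ∀ τ : ι → α, 2 * ∑ i, ∑ j ∈ univ.filter (fun j => τ j < τ i), f i j =
      ∑ i, ∑ j, ((if τ j < τ i then f i j else 0) + if τ i < τ j then f j i else 0) := by
    intro τ
    simp only [sum_filter, sum_add_distrib]
    rw [sum_comm (f := fun i j => if τ i < τ j then f j i else 0)]
    ring
  have pair : ∀ i j,
      ((if σ j < σ i then f i j else 0) + if σ i < σ j then f j i else 0) ≤
        (if π j < π i then f i j else 0) + if π i < π j then f j i else 0 := by
    intro i j
    rcases eq_or_ne i j with rfl | hij
    · simp
    rcases (hσ.ne hij).lt_or_gt with hs | hs <;> rcases (hπ.ne hij).lt_or_gt with hp | hp <;>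
      simp [hs, hp, hs.not_gt, hp.not_gt, hf _ _ hp]
  have := sum_le_sum fun i (_ : i ∈ univ) => sum_le_sum fun j (_ : j ∈ univ) => pair i j
  rw [← symmetrize, ← symmetrize] at this
  linarith

theorem revenue_eq_sum_add_sum_filter_lt {V : Type*} [Fintype V] [DecidableEq V]
    (w : V → V → ℝ) (τ : V ≃ Fin (Fintype.card V)) (p : V → ℝ) :
    revenue w τ p = ∑ i, p i * (1 - p i) * w i i +
      ∑ i, ∑ j ∈ univ.filter (fun j => τ j < τ i), p i * (1 - p i) * (p j * w j i) := by
  simp only [revenue, mul_add, sum_add_distrib, mul_sum]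

/-- Approaching the buyers in non-increasing order of their pricing probabilities
maximizes the revenue extracted from an undirected social network under `p`. -/
theorem nonincreasing_order_maximizes_revenue
    {V : Type*} [Fintype V] [DecidableEq V] (w : V → V → ℝ)
    (hsymm : ∀ i j, w i j = w j i) (hnonneg : ∀ i j, 0 ≤ w i j)
    (p : V → ℝ) (hp : ∀ i, 1/2 ≤ p i ∧ p i ≤ 1)
    (π : V ≃ Fin (Fintype.card V))
    (hπ : ∀ i j, π i < π j → p j ≤ p i) :
    ∀ σ : V ≃ Fin (Fintype.card V), revenue w σ p ≤ revenue w π p := by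
  intro σ
  rw [revenue_eq_sum_add_sum_filter_lt, revenue_eq_sum_add_sum_filter_lt]
  refine add_le_add_right (sum_sum_filter_lt_le_of_ordered _ σ.injective π.injective ?_) _
  intro i j hji
  have hpij : p i ≤ p j := hπ j i hji
  have hpair : 0 ≤ p i * p j * w i j :=
    mul_nonneg (mul_nonneg (by linarith [hp i]) (by linarith [hp j])) (hnonneg i j)
  rw [hsymm j i]
  nlinarith [mul_le_mul_of_nonneg_left hpij hpair]
end

section
/- Let G be the '3-path', the undirected social network on the four nodes {a, a', b', b} with zero self-weights and unit-weight edges {a, a'}, {a', b'}, {b', b}. Then the maximum revenue of G equals 3/4, and it is attained only when exactly one of the endpoint nodes a, b has pricing probability 1/2 and the other has pricing probability 1. -/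
/-!
A unit edge `{i, j}` whose endpoint `i` is offered first contributes `p_j (1 - p_j) p_i` to the
revenue. Since `y (1 - y) ≤ 1/4`, this is at most `p_i / 4 ≤ 1/4`, with equality exactly when
the earlier endpoint has `p = 1` and the later one `p = 1/2`. The 3-path has three edges, so the
revenue is at most `3/4`, and it equals `3/4` only if every edge pairs the values `1/2` and `1`;
along a path of odd length these alternate, so the endpoints carry different values.
-/

open Finset

/-- The '3-path': nodes `a = 0`, `a' = 1`, `b' = 2`, `b = 3`, with zero self-weights
and unit-weight edges `{a, a'}, {a', b'}, {b', b}`. -/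
noncomputable def threePath : Fin 4 → Fin 4 → ℝ := fun i j =>
  if (i, j) ∈ ({(0, 1), (1, 0), (1, 2), (2, 1), (2, 3), (3, 2)} :
      Finset (Fin 4 × Fin 4))
  then 1 else 0

lemma mul_one_sub_mul_le_quarter {x y : ℝ} (hx₀ : 0 ≤ x) (hx₁ : x ≤ 1) :
    y * (1 - y) * x ≤ 1 / 4 := by
  nlinarith [mul_nonneg (sq_nonneg (2 * y - 1)) hx₀]

lemma eq_half_and_eq_one_of_mul_one_sub_mul_eq_quarter {x y : ℝ} (hx₀ : 0 ≤ x) (hx₁ : x ≤ 1)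
    (h : y * (1 - y) * x = 1 / 4) : y = 1 / 2 ∧ x = 1 := by
  have hx : x = 1 := by nlinarith [mul_nonneg (sq_nonneg (2 * y - 1)) hx₀]
  subst hx
  exact ⟨by nlinarith [sq_nonneg (2 * y - 1)], rfl⟩

section Edge

variable {V : Type*} {n : ℕ} (π : V ≃ Fin n) (p : V → ℝ)

noncomputable def edgeRevenue (i j : V) : ℝ :=
  if π i < π j then p j * (1 - p j) * p i else p i * (1 - p i) * p j

variable {π p}

lemma edgeRevenue_le_quarter {i j : V} (hi : 0 ≤ p i ∧ p i ≤ 1) (hj : 0 ≤ p j ∧ p j ≤ 1) :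
    edgeRevenue π p i j ≤ 1 / 4 := by
  unfold edgeRevenue
  split_ifs
  · exact mul_one_sub_mul_le_quarter hi.1 hi.2
  · exact mul_one_sub_mul_le_quarter hj.1 hj.2

lemma eq_half_or_eq_one_and_add_eq_of_edgeRevenue_eq_quarter {i j : V} (hi : 0 ≤ p i ∧ p i ≤ 1)
    (hj : 0 ≤ p j ∧ p j ≤ 1) (h : edgeRevenue π p i j = 1 / 4) :
    (p i = 1 / 2 ∨ p i = 1) ∧ p i + p j = 3 / 2 := by
  unfold edgeRevenue at h
  split_ifs at h
  · obtain ⟨hj, hi⟩ := eq_half_and_eq_one_of_mul_one_sub_mul_eq_quarter hi.1 hi.2 h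
    exact ⟨.inr hi, by rw [hi, hj]; norm_num⟩
  · obtain ⟨hi, hj⟩ := eq_half_and_eq_one_of_mul_one_sub_mul_eq_quarter hj.1 hj.2 h
    exact ⟨.inl hi, by rw [hi, hj]; norm_num⟩

end Edge

section ThreePath

variable (π : Fin 4 ≃ Fin (Fintype.card (Fin 4))) (p : Fin 4 → ℝ)

lemma revenue_threePath :
    revenue threePath π p =
      edgeRevenue π p 0 1 + edgeRevenue π p 1 2 + edgeRevenue π p 2 3 := by
  have h01 : π 0 < π 1 ∨ π 1 < π 0 := (π.injective.ne (by decide : (0 : Fin 4) ≠ 1)).lt_or_gt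
  have h12 : π 1 < π 2 ∨ π 2 < π 1 := (π.injective.ne (by decide : (1 : Fin 4) ≠ 2)).lt_or_gt
  have h23 : π 2 < π 3 ∨ π 3 < π 2 := (π.injective.ne (by decide : (2 : Fin 4) ≠ 3)).lt_or_gt
  simp only [revenue, edgeRevenue, sum_filter, Fin.sum_univ_four]
  rcases h01 with h1 | h1 <;> rcases h12 with h2 | h2 <;> rcases h23 with h3 | h3 <;>
    simp [threePath, Prod.ext_iff, h1, h2, h3, h1.asymm, h2.asymm, h3.asymm] <;> ring

variable {π p} (hp : ∀ i, 0 ≤ p i ∧ p i ≤ 1)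
include hp

lemma revenue_threePath_le : revenue threePath π p ≤ 3 / 4 := by
  rw [revenue_threePath]
  linarith [edgeRevenue_le_quarter (π := π) (hp 0) (hp 1),
    edgeRevenue_le_quarter (π := π) (hp 1) (hp 2), edgeRevenue_le_quarter (π := π) (hp 2) (hp 3)]

lemma edgeRevenue_threePath_eq_quarter (h : revenue threePath π p = 3 / 4) :
    edgeRevenue π p 0 1 = 1 / 4 ∧ edgeRevenue π p 1 2 = 1 / 4 ∧ edgeRevenue π p 2 3 = 1 / 4 := by
  have h01 := edgeRevenue_le_quarter (π := π) (hp 0) (hp 1)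
  have h12 := edgeRevenue_le_quarter (π := π) (hp 1) (hp 2)
  have h23 := edgeRevenue_le_quarter (π := π) (hp 2) (hp 3)
  rw [revenue_threePath] at h
  refine ⟨?_, ?_, ?_⟩ <;> linarith

end ThreePath

/-- The maximum revenue of the 3-path equals `3/4`, and it is attained only when
exactly one of the endpoint nodes `a, b` has pricing probability `1/2` and the other
has pricing probability `1`. -/
theorem threePath_maxRev :
    IsGreatest {r | ∃ (π : Fin 4 ≃ Fin (Fintype.card (Fin 4))) (p : Fin 4 → ℝ),
        (∀ i, 1/2 ≤ p i ∧ p i ≤ 1) ∧ r = revenue threePath π p} (3/4) ∧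
      ∀ (π : Fin 4 ≃ Fin (Fintype.card (Fin 4))) (p : Fin 4 → ℝ),
        (∀ i, 1/2 ≤ p i ∧ p i ≤ 1) →
        revenue threePath π p = 3/4 →
        ((p 0 = 1/2 ∧ p 3 = 1) ∨ (p 3 = 1/2 ∧ p 0 = 1)) := by
  have unit_interval {p : Fin 4 → ℝ} (hp : ∀ i, 1/2 ≤ p i ∧ p i ≤ 1) (i : Fin 4) :
      0 ≤ p i ∧ p i ≤ 1 := ⟨by linarith [hp i], (hp i).2⟩
  refine ⟨⟨?_, ?_⟩, fun π p hp hrev => ?_⟩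
  · refine ⟨(Equiv.swap 0 1).trans (Equiv.swap 2 3), ![1/2, 1, 1/2, 1],
      by intro i; fin_cases i <;> norm_num, ?_⟩
    rw [revenue_threePath]
    simp +decide [edgeRevenue]
    norm_num
  · rintro r ⟨π, p, hp, rfl⟩
    exact revenue_threePath_le (unit_interval hp)
  · have hp := unit_interval hp
    obtain ⟨e01, e12, e23⟩ := edgeRevenue_threePath_eq_quarter hp hrev
    obtain ⟨hp0, s01⟩ := eq_half_or_eq_one_and_add_eq_of_edgeRevenue_eq_quarter (hp 0) (hp 1) e01
    have s12 := (eq_half_or_eq_one_and_add_eq_of_edgeRevenue_eq_quarter (hp 1) (hp 2) e12).2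
    have s23 := (eq_half_or_eq_one_and_add_eq_of_edgeRevenue_eq_quarter (hp 2) (hp 3) e23).2
    rcases hp0 with hp0 | hp0
    · exact .inl ⟨hp0, by linarith⟩
    · exact .inr ⟨by linarith, hp0⟩
end

section
/- Fix a pricing probability p ∈ [1/2, 1). Let (V, T_1, …, T_m) be an instance of monotone One-in-Three 3-SAT, i.e., V is a finite set of items and each T_j ⊆ V has 2 ≤ |T_j| ≤ 3. Construct the undirected social network G on the node set V with zero self-weights and, for distinct u, v ∈ V, edge weight w_{uv} = (number of indices j with |T_j| = 3 and u, v ∈ T_j) + (2 + p)·(number of indices j with T_j = {u, v}). Then there exists a subset S ⊆ V with |S ∩ T_j| = 1 for all j ∈ {1, …, m} if and only if there exists an influence set A ⊆ V with R_IE(A, p) ≥ m·p(1 − p)(2 + p). -/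
open Finset

/-- The expected revenue of the Influence-and-Exploit strategy `IE(A, p)` on an
undirected social network with weights `w`:
`R_IE(A, p) = p(1-p) Σ_{i ∈ V∖A} (w_ii + Σ_{j∈A} w_ji + (p/2) Σ_{j ∈ V∖A, j≠i} w_ji)`. -/
noncomputable def ieRev {V : Type*} [Fintype V] [DecidableEq V]
    (w : V → V → ℝ) (A : Finset V) (p : ℝ) : ℝ :=
  p * (1 - p) * ∑ i ∈ Aᶜ,
    (w i i + ∑ j ∈ A, w j i + (p / 2) * ∑ j ∈ Aᶜ \ {i}, w j i)

/-- The social network built from a monotone One-in-Three 3-SAT instance for the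
IE-hardness reduction: for distinct `u, v`, the weight of `{u, v}` is the number of
3-element clauses containing both `u` and `v`, plus `(2 + p)` times the number of
clauses equal to `{u, v}`; self-weights are zero. -/
noncomputable def satIEWeight {V : Type*} [Fintype V] [DecidableEq V] {m : ℕ}
    (T : Fin m → Finset V) (p : ℝ) : V → V → ℝ := fun u v =>
  if u = v then 0 else
    ((univ.filter (fun j : Fin m => (T j).card = 3 ∧ u ∈ T j ∧ v ∈ T j)).card : ℝ) +
      (2 + p) * ((univ.filter (fun j : Fin m => T j = {u, v})).card : ℝ)

set_option linter.unusedSectionVars false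
set_option linter.unusedTactic false

section IEAux

variable {V : Type*} [Fintype V] [DecidableEq V]

noncomputable def clauseE (T0 : Finset V) (p : ℝ) (j i : V) : ℝ :=
  (if T0.card = 3 ∧ j ∈ T0 ∧ i ∈ T0 then 1 else 0) + (2 + p) * (if T0 = {j, i} then 1 else 0)

noncomputable def clauseRev (T0 A : Finset V) (p : ℝ) : ℝ :=
  ∑ i ∈ Aᶜ, ((∑ j ∈ A, clauseE T0 p j i) + (p / 2) * ∑ j ∈ Aᶜ \ {i}, clauseE T0 p j i)

omit [Fintype V] in
lemma sum_ind (A T0 : Finset V) : ∑ j ∈ A, (if j ∈ T0 then (1:ℝ) else 0) = (A ∩ T0).card := by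
  rw [Finset.sum_boole, Finset.filter_mem_eq_inter]

omit [Fintype V] in
lemma pair_eq_pair_iff' {u v j i : V} (_ : u ≠ v) :
    ({u, v} : Finset V) = {j, i} ↔ (j = u ∧ i = v) ∨ (j = v ∧ i = u) := by
  rw [← Finset.coe_inj]; push_cast; rw [Set.pair_eq_pair_iff]; tauto

omit [Fintype V] in
lemma sum_pair_ind {u v : V} (huv : u ≠ v) (i : V) (s : Finset V) :
    ∑ j ∈ s, (if ({u, v} : Finset V) = {j, i} then (1:ℝ) else 0)
      = (if u ∈ s ∧ i = v then 1 else 0) + (if v ∈ s ∧ i = u then 1 else 0) := by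
  have : ∀ j, (if ({u, v} : Finset V) = {j, i} then (1:ℝ) else 0)
      = (if j = u then (if i = v then (1:ℝ) else 0) else 0)
        + (if j = v then (if i = u then (1:ℝ) else 0) else 0) := by
    intro j
    rw [if_congr (pair_eq_pair_iff' huv) rfl rfl]
    by_cases h1 : j = u <;> by_cases h2 : i = v <;> by_cases h3 : j = v <;>
      by_cases h4 : i = u <;> simp_all
  simp only [this, Finset.sum_add_distrib, Finset.sum_ite_eq' s u, Finset.sum_ite_eq' s v,
    ite_and]

lemma clauseRev_card3 (T0 A : Finset V) (p : ℝ) (h3 : T0.card = 3) :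
    clauseRev T0 A p = ((Aᶜ ∩ T0).card : ℝ) *
      (((A ∩ T0).card : ℝ) + (p / 2) * (((Aᶜ ∩ T0).card : ℝ) - 1)) := by
  have hpair : ∀ j i : V, T0 ≠ ({j, i} : Finset V) := by
    intro j i h
    have h2 : ({j, i} : Finset V).card ≤ 2 := Finset.card_insert_le j {i}
    rw [← h, h3] at h2; omega
  have hE : ∀ j i, clauseE T0 p j i
      = (if j ∈ T0 then (1:ℝ) else 0) * (if i ∈ T0 then 1 else 0) := by
    intro j i; unfold clauseE; rw [if_neg (hpair j i)]
    by_cases h1 : j ∈ T0 <;> by_cases h2 : i ∈ T0 <;> simp [h1, h2, h3]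
  unfold clauseRev
  simp only [hE, ← Finset.sum_mul, sum_ind]
  have step : ∀ i ∈ Aᶜ,
      ((A ∩ T0).card : ℝ) * (if i ∈ T0 then 1 else 0)
        + p / 2 * ((((Aᶜ \ {i}) ∩ T0).card : ℝ) * (if i ∈ T0 then 1 else 0))
      = if i ∈ T0 then ((A ∩ T0).card : ℝ) + p / 2 * (((Aᶜ ∩ T0).card : ℝ) - 1) else 0 := by
    intro i hi
    by_cases h : i ∈ T0
    · have hmem : i ∈ Aᶜ ∩ T0 := Finset.mem_inter.2 ⟨hi, h⟩
      have hset : (Aᶜ \ {i}) ∩ T0 = (Aᶜ ∩ T0) \ {i} := by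
        ext a; simp [Finset.mem_sdiff, Finset.mem_inter]; tauto
      have hcard : (((Aᶜ \ {i}) ∩ T0).card : ℝ) = ((Aᶜ ∩ T0).card : ℝ) - 1 := by
        rw [hset, Finset.card_sdiff_of_subset (Finset.singleton_subset_iff.2 hmem)]
        have : 1 ≤ (Aᶜ ∩ T0).card := Finset.card_pos.2 ⟨i, hmem⟩
        rw [Finset.card_singleton, Nat.cast_sub this]; push_cast; ring
      simp [h, hcard]
    · simp [h]
  rw [Finset.sum_congr rfl step, Finset.sum_ite_mem, Finset.sum_const]
  push_cast; ring

lemma clauseRev_card2 {u v : V} (huv : u ≠ v) (A : Finset V) (p : ℝ) :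
    clauseRev {u, v} A p = (2 + p) *
      ((if u ∈ A ∧ v ∉ A then (1:ℝ) else 0) + (if v ∈ A ∧ u ∉ A then 1 else 0)
        + (p / 2) * (if u ∉ A ∧ v ∉ A then 2 else 0)) := by
  have hc2 : ({u, v} : Finset V).card = 2 := Finset.card_pair huv
  have hE : ∀ j i, clauseE ({u, v} : Finset V) p j i
      = (2 + p) * (if ({u, v} : Finset V) = {j, i} then 1 else 0) := by
    intro j i; unfold clauseE; rw [if_neg]; · ring
    · rintro ⟨h, -⟩; rw [hc2] at h; omega
  unfold clauseRev
  have key1 : ∀ x, (∑ j ∈ A, clauseE ({u, v} : Finset V) p j x)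
      = (2 + p) * ((if u ∈ A ∧ x = v then (1:ℝ) else 0) + (if v ∈ A ∧ x = u then 1 else 0)) := by
    intro x; simp only [hE, ← Finset.mul_sum]; rw [sum_pair_ind huv]
  have key2 : ∀ x, (∑ j ∈ Aᶜ \ {x}, clauseE ({u, v} : Finset V) p j x)
      = (2 + p) * ((if u ∈ Aᶜ \ {x} ∧ x = v then (1:ℝ) else 0)
          + (if v ∈ Aᶜ \ {x} ∧ x = u then 1 else 0)) := by
    intro x; simp only [hE, ← Finset.mul_sum]; rw [sum_pair_ind huv]
  simp only [key1, key2]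
  have rearr : ∀ x ∈ Aᶜ,
      (2 + p) * ((if u ∈ A ∧ x = v then (1:ℝ) else 0) + (if v ∈ A ∧ x = u then 1 else 0))
        + p / 2 * ((2 + p) * ((if u ∈ Aᶜ \ {x} ∧ x = v then (1:ℝ) else 0)
          + (if v ∈ Aᶜ \ {x} ∧ x = u then 1 else 0)))
      = (2 + p) * (((if u ∈ A ∧ x = v then (1:ℝ) else 0) + (if v ∈ A ∧ x = u then 1 else 0))
          + p / 2 * ((if u ∈ Aᶜ \ {x} ∧ x = v then (1:ℝ) else 0)
            + (if v ∈ Aᶜ \ {x} ∧ x = u then 1 else 0))) := by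
    intro x _; ring
  rw [Finset.sum_congr rfl rearr, ← Finset.mul_sum]
  congr 1
  rw [Finset.sum_add_distrib]
  have e1 : ∑ i ∈ Aᶜ, ((if u ∈ A ∧ i = v then (1:ℝ) else 0) + (if v ∈ A ∧ i = u then 1 else 0))
      = (if u ∈ A ∧ v ∉ A then (1:ℝ) else 0) + (if v ∈ A ∧ u ∉ A then 1 else 0) := by
    simp only [Finset.sum_add_distrib, ite_and]
    by_cases hu : u ∈ A <;> by_cases hv : v ∈ A <;>
      simp [hu, hv, Finset.sum_ite_eq' Aᶜ v, Finset.sum_ite_eq' Aᶜ u, Finset.mem_compl]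
  have e2 : ∑ i ∈ Aᶜ, (p / 2) * ((if u ∈ Aᶜ \ {i} ∧ i = v then (1:ℝ) else 0)
        + (if v ∈ Aᶜ \ {i} ∧ i = u then 1 else 0))
      = (p / 2) * (if u ∉ A ∧ v ∉ A then 2 else 0) := by
    rw [← Finset.mul_sum]
    congr 1
    simp only [Finset.sum_add_distrib, ite_and]
    have c1 : ∀ i ∈ Aᶜ, (if u ∈ Aᶜ \ {i} then (if i = v then (1:ℝ) else 0) else 0)
        = (if i = v then (if u ∈ Aᶜ \ {v} then (1:ℝ) else 0) else 0) := by
      intro i _; by_cases h : i = v <;> simp [h]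
    have c2 : ∀ i ∈ Aᶜ, (if v ∈ Aᶜ \ {i} then (if i = u then (1:ℝ) else 0) else 0)
        = (if i = u then (if v ∈ Aᶜ \ {u} then (1:ℝ) else 0) else 0) := by
      intro i _; by_cases h : i = u <;> simp [h]
    rw [Finset.sum_congr rfl c1, Finset.sum_congr rfl c2, Finset.sum_ite_eq' Aᶜ v,
      Finset.sum_ite_eq' Aᶜ u]
    by_cases hu : u ∈ A <;> by_cases hv : v ∈ A <;>
      simp [hu, hv, Finset.mem_sdiff, Finset.mem_compl, huv, Ne.symm huv]
    norm_num
  rw [e1, e2]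

lemma clauseRev_key (T0 A : Finset V) (p : ℝ) (hp : 1/2 ≤ p) (hp1 : p < 1)
    (hT0 : 2 ≤ T0.card ∧ T0.card ≤ 3) :
    clauseRev T0 A p ≤ 2 + p ∧ (clauseRev T0 A p = 2 + p ↔ (A ∩ T0).card = 1) := by
  have hc23 : T0.card = 2 ∨ T0.card = 3 := by omega
  rcases hc23 with hc | hc
  · -- card = 2
    obtain ⟨u, v, huv, rfl⟩ := Finset.card_eq_two.mp hc
    rw [clauseRev_card2 huv A p]
    have hcard : A ∩ {u, v} = ({u, v} : Finset V).filter (· ∈ A) := by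
      rw [Finset.inter_comm, Finset.filter_mem_eq_inter]
    by_cases hu : u ∈ A <;> by_cases hv : v ∈ A
    · have hc1 : (A ∩ {u, v}).card = 2 := by
        rw [hcard]; simp [Finset.filter_insert, Finset.filter_singleton, hu, hv, huv]
      have hval : (2 + p) * ((if u ∈ A ∧ v ∉ A then (1:ℝ) else 0)
          + (if v ∈ A ∧ u ∉ A then 1 else 0)
          + (p / 2) * (if u ∉ A ∧ v ∉ A then 2 else 0)) = 0 := by simp [hu, hv]
      rw [hval]
      exact ⟨by linarith, fun h => by exfalso; linarith, fun h => by omega⟩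
    · have hc1 : (A ∩ {u, v}).card = 1 := by
        rw [hcard]; simp [Finset.filter_insert, Finset.filter_singleton, hu, hv]
      have hval : (2 + p) * ((if u ∈ A ∧ v ∉ A then (1:ℝ) else 0)
          + (if v ∈ A ∧ u ∉ A then 1 else 0)
          + (p / 2) * (if u ∉ A ∧ v ∉ A then 2 else 0)) = 2 + p := by simp [hu, hv]
      rw [hval]
      exact ⟨le_refl _, fun _ => hc1, fun _ => rfl⟩
    · have hc1 : (A ∩ {u, v}).card = 1 := by
        rw [hcard]; simp [Finset.filter_insert, Finset.filter_singleton, hu, hv]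
      have hval : (2 + p) * ((if u ∈ A ∧ v ∉ A then (1:ℝ) else 0)
          + (if v ∈ A ∧ u ∉ A then 1 else 0)
          + (p / 2) * (if u ∉ A ∧ v ∉ A then 2 else 0)) = 2 + p := by simp [hu, hv]
      rw [hval]
      exact ⟨le_refl _, fun _ => hc1, fun _ => rfl⟩
    · have hc1 : (A ∩ {u, v}).card = 0 := by
        rw [hcard]; simp [Finset.filter_insert, Finset.filter_singleton, hu, hv]
      have hval : (2 + p) * ((if u ∈ A ∧ v ∉ A then (1:ℝ) else 0)
          + (if v ∈ A ∧ u ∉ A then 1 else 0)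
          + (p / 2) * (if u ∉ A ∧ v ∉ A then 2 else 0)) = (2 + p) * p := by
        simp [hu, hv]
      rw [hval]
      exact ⟨by nlinarith, fun h => by exfalso; nlinarith, fun h => by omega⟩
  · -- card = 3
    rw [clauseRev_card3 T0 A p hc]
    have hsum : (A ∩ T0).card + (Aᶜ ∩ T0).card = 3 := by
      have hd : T0 ∩ Aᶜ = T0 \ A := by ext a; simp [Finset.mem_sdiff]
      rw [Finset.inter_comm A T0, Finset.inter_comm Aᶜ T0, hd, ← hc]
      exact Finset.card_inter_add_card_sdiff T0 A
    have hs4 : (A ∩ T0).card = 0 ∨ (A ∩ T0).card = 1 ∨ (A ∩ T0).card = 2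
        ∨ (A ∩ T0).card = 3 := by omega
    rcases hs4 with hs | hs | hs | hs
    · have htn : (Aᶜ ∩ T0).card = 3 := by omega
      have hval : ((Aᶜ ∩ T0).card : ℝ) * (((A ∩ T0).card : ℝ)
          + p / 2 * (((Aᶜ ∩ T0).card : ℝ) - 1)) = 3 * p := by
        rw [hs, htn]; push_cast; ring
      rw [hval]
      exact ⟨by linarith, fun h => by exfalso; linarith, fun h => by omega⟩
    · have htn : (Aᶜ ∩ T0).card = 2 := by omega
      have hval : ((Aᶜ ∩ T0).card : ℝ) * (((A ∩ T0).card : ℝ)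
          + p / 2 * (((Aᶜ ∩ T0).card : ℝ) - 1)) = 2 + p := by
        rw [hs, htn]; push_cast; ring
      rw [hval]
      exact ⟨le_refl _, fun _ => hs, fun _ => rfl⟩
    · have htn : (Aᶜ ∩ T0).card = 1 := by omega
      have hval : ((Aᶜ ∩ T0).card : ℝ) * (((A ∩ T0).card : ℝ)
          + p / 2 * (((Aᶜ ∩ T0).card : ℝ) - 1)) = 2 := by
        rw [hs, htn]; push_cast; ring
      rw [hval]
      exact ⟨by linarith, fun h => by exfalso; linarith, fun h => by omega⟩
    · have htn : (Aᶜ ∩ T0).card = 0 := by omega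
      have hval : ((Aᶜ ∩ T0).card : ℝ) * (((A ∩ T0).card : ℝ)
          + p / 2 * (((Aᶜ ∩ T0).card : ℝ) - 1)) = 0 := by
        rw [htn]; push_cast; ring
      rw [hval]
      exact ⟨by linarith, fun h => by exfalso; linarith, fun h => by omega⟩


lemma weight_eq_sum {m : ℕ} (T : Fin m → Finset V) (p : ℝ) {j i : V} (h : j ≠ i) :
    satIEWeight T p j i = ∑ k : Fin m, clauseE (T k) p j i := by
  simp only [satIEWeight, if_neg h, clauseE, Finset.sum_add_distrib, Finset.sum_boole,
    ← Finset.mul_sum]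

lemma ieRev_decomp {m : ℕ} (T : Fin m → Finset V) (p : ℝ) (A : Finset V) :
    ieRev (satIEWeight T p) A p = p * (1 - p) * ∑ k : Fin m, clauseRev (T k) A p := by
  unfold ieRev clauseRev
  congr 1
  rw [Finset.sum_comm]
  refine Finset.sum_congr rfl fun i hi => ?_
  have h1 : satIEWeight T p i i = 0 := by simp [satIEWeight]
  have h2 : ∑ j ∈ A, satIEWeight T p j i = ∑ k : Fin m, ∑ j ∈ A, clauseE (T k) p j i := by
    rw [Finset.sum_comm]
    refine Finset.sum_congr rfl fun j hj => ?_
    exact weight_eq_sum T p (by rintro rfl; simp [Finset.mem_compl] at hi; exact hi hj)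
  have h3 : ∑ j ∈ Aᶜ \ {i}, satIEWeight T p j i
      = ∑ k : Fin m, ∑ j ∈ Aᶜ \ {i}, clauseE (T k) p j i := by
    rw [Finset.sum_comm]
    refine Finset.sum_congr rfl fun j hj => ?_
    exact weight_eq_sum T p (by simp [Finset.mem_sdiff] at hj; exact hj.2)
  rw [h1, h2, h3, Finset.sum_add_distrib, ← Finset.mul_sum]
  ring

end IEAux

/-- A monotone One-in-Three 3-SAT instance has an exact hitting set iff the
constructed network admits an influence set `A` with
`R_IE(A, p) ≥ m·p(1-p)(2+p)`. -/

theorem oneInThree_iff_bestIE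
    {V : Type*} [Fintype V] [DecidableEq V] {m : ℕ} (T : Fin m → Finset V)
    (hT : ∀ j, 2 ≤ (T j).card ∧ (T j).card ≤ 3)
    (p : ℝ) (hp : 1/2 ≤ p) (hp1 : p < 1) :
    (∃ S : Finset V, ∀ j, (S ∩ T j).card = 1) ↔
      ∃ A : Finset V, ieRev (satIEWeight T p) A p ≥ m * (p * (1 - p) * (2 + p)) := by
  have hkey : ∀ (A : Finset V) (j : Fin m), clauseRev (T j) A p ≤ 2 + p ∧
      (clauseRev (T j) A p = 2 + p ↔ (A ∩ T j).card = 1) :=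
    fun A j => clauseRev_key (T j) A p hp hp1 ⟨(hT j).1, (hT j).2⟩
  have hpos : (0:ℝ) < p * (1 - p) := by nlinarith
  constructor
  · rintro ⟨S, hS⟩
    refine ⟨S, ?_⟩
    rw [ieRev_decomp T p S]
    have hv : ∀ k ∈ (univ : Finset (Fin m)), clauseRev (T k) S p = 2 + p :=
      fun k _ => ((hkey S k).2).2 (hS k)
    rw [Finset.sum_congr rfl hv, Finset.sum_const, Finset.card_univ, Fintype.card_fin,
      nsmul_eq_mul]
    exact le_of_eq (by ring)
  · rintro ⟨A, hA⟩
    refine ⟨A, fun j => ?_⟩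
    rw [ieRev_decomp T p A] at hA
    have hsum_ge : (m:ℝ) * (2 + p) ≤ ∑ k : Fin m, clauseRev (T k) A p := by
      by_contra hlt
      push_neg at hlt
      have h2 := mul_lt_mul_of_pos_left hlt hpos
      rw [ge_iff_le] at hA
      nlinarith
    have hall : ∀ k ∈ (univ : Finset (Fin m)), clauseRev (T k) A p = 2 + p := by
      by_contra hne
      push_neg at hne
      obtain ⟨k, -, hk⟩ := hne
      have hlt : ∑ k : Fin m, clauseRev (T k) A p < ∑ _k : Fin m, (2 + p) :=
        Finset.sum_lt_sum (fun i _ => (hkey A i).1)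
          ⟨k, Finset.mem_univ k, lt_of_le_of_ne (hkey A k).1 hk⟩
      rw [Finset.sum_const, Finset.card_univ, Fintype.card_fin, nsmul_eq_mul] at hlt
      linarith
    exact ((hkey A j).2).1 (hall j (Finset.mem_univ j))
end
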